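/- Let p be an odd prime. Every left brace with additive group isomorphic to (Z/(p))³ whose socle has order p² is isomorphic to exactly one of the following three left braces on (Z/(p))³ (with componentwise addition): (i) (x₁,y₁,z₁)·(x₂,y₂,z₂) = (x₁+x₂+z₁y₂+C(z₁,2)z₂, y₁+y₂+z₁z₂, z₁+z₂), where C(n,2) = n(n−1)/2; (ii) (x₁,y₁,z₁)·(x₂,y₂,z₂) = (x₁+x₂+y₁y₂, y₁+y₂, z₁+z₂); (iii) (x₁,y₁,z₁)·(x₂,y₂,z₂) = (x₁+x₂+z₁y₂, y₁+y₂, z₁+z₂). These three left braces are pairwise non-isomorphic. -/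

import Mathlib

/-- A left brace: an abelian group `(B,+)` and a group `(B,·)` such that
`a·(b+c)+a = a·b+a·c` for all `a b c`. -/
class LeftBrace (B : Type*) extends AddCommGroup B, Group B where
  left_brace : ∀ a b c : B, a * (b + c) + a = a * b + a * c

/-- `C(z,2) = z(z−1)/2` computed in `Z/(p)` (for odd `p`). -/
def choose2ZMod (p : ℕ) (z : ZMod p) : ZMod p := z * (z - 1) * (2 : ZMod p)⁻¹

/-- Multiplication (i): `(x₁,y₁,z₁)·(x₂,y₂,z₂) =
(x₁+x₂+z₁y₂+C(z₁,2)z₂, y₁+y₂+z₁z₂, z₁+z₂)`. -/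
def mulSocP2A (p : ℕ) (a b : ZMod p × ZMod p × ZMod p) : ZMod p × ZMod p × ZMod p :=
  (a.1 + b.1 + a.2.2 * b.2.1 + choose2ZMod p a.2.2 * b.2.2,
   a.2.1 + b.2.1 + a.2.2 * b.2.2,
   a.2.2 + b.2.2)

/-- Multiplication (ii): `(x₁,y₁,z₁)·(x₂,y₂,z₂) = (x₁+x₂+y₁y₂, y₁+y₂, z₁+z₂)`. -/
def mulSocP2B (p : ℕ) (a b : ZMod p × ZMod p × ZMod p) : ZMod p × ZMod p × ZMod p :=
  (a.1 + b.1 + a.2.1 * b.2.1, a.2.1 + b.2.1, a.2.2 + b.2.2)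

/-- Multiplication (iii): `(x₁,y₁,z₁)·(x₂,y₂,z₂) = (x₁+x₂+z₁y₂, y₁+y₂, z₁+z₂)`. -/
def mulSocP2C (p : ℕ) (a b : ZMod p × ZMod p × ZMod p) : ZMod p × ZMod p × ZMod p :=
  (a.1 + b.1 + a.2.2 * b.2.1, a.2.1 + b.2.1, a.2.2 + b.2.2)

/-! Write `S = Soc(B)`: a normal subgroup of index `p` on which `+` and `·` agree, hence also an
additive subgroup, with `λ_a(S) = S`. For `t ∉ S`, `λ_t` acts on the line `B / S` by a scalar `c`
with `c ^ p = 1`, so `c = 1`; hence `λ_x = λ_t ^ n` whenever `x - n • t ∈ S`, that is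
`x · y = x + σ ^ z(x) y` with `σ = λ_t` and `z` the functional with kernel `S` and `z(t) = 1`.
Now `N = σ - 1` satisfies `N ^ 3 = 0`, `N ≠ 0` and `z ∘ N = 0`, and a basis adapted to `N` and `z`
gives (i) if `N ^ 2 ≠ 0`, and otherwise (ii) or (iii) according as `ker z ≤ ker N` or not.
Only (ii) has a commutative multiplication, while `(λ_a - 1) ^ 2 = 0` for all `a` holds in (ii)
and (iii) but not in (i). -/

namespace LeftBrace

variable {B : Type*} [LeftBrace B]

theorem mul_zero_eq (a : B) : a * 0 = a := by
  simpa using (left_brace a 0 0).symm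

theorem one_eq_zero : (1 : B) = 0 := by
  simpa using (mul_zero_eq (1 : B)).symm

theorem mul_add_sub (a b c : B) : a * (b + c) - a = (a * b - a) + (a * c - a) := by
  rw [eq_sub_of_add_eq (left_brace a b c)]
  abel

theorem mul_mul_sub (a b c : B) : a * b * c - a * b = a * (b * c - b) - a := by
  have h := left_brace a (b * c - b) b
  rw [sub_add_cancel] at h
  rw [mul_assoc, eq_sub_of_add_eq h]
  abel

variable (B) in
def lambdaHom : B →* AddMonoid.End B where
  toFun a :=
    { toFun := fun b => a * b - a
      map_zero' := by simp [mul_zero_eq]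
      map_add' := mul_add_sub a }
  map_one' := by
    ext b
    change 1 * b - 1 = b
    rw [one_mul, one_eq_zero, sub_zero]
  map_mul' a b := by
    ext c
    exact mul_mul_sub a b c

theorem lambdaHom_apply (a b : B) : lambdaHom B a b = a * b - a := rfl

theorem mul_eq_add_lambdaHom (a b : B) : a * b = a + lambdaHom B a b := by
  rw [lambdaHom_apply]
  abel

variable (B) in
def socle : Subgroup B := (lambdaHom B).ker

theorem mem_socle_iff {a : B} : a ∈ socle B ↔ ∀ b, a * b - a = b := by
  rw [socle, MonoidHom.mem_ker, DFunLike.ext_iff]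
  rfl

theorem mul_eq_add_of_mem_socle {s : B} (hs : s ∈ socle B) (b : B) : s * b = s + b := by
  rw [mul_eq_add_lambdaHom, MonoidHom.mem_ker.mp hs]
  rfl

theorem lambdaHom_add_of_mem_socle {s : B} (hs : s ∈ socle B) (a : B) :
    lambdaHom B (s + a) = lambdaHom B a := by
  rw [← mul_eq_add_of_mem_socle hs, map_mul, MonoidHom.mem_ker.mp hs, one_mul]

theorem lambdaHom_apply_mem_socle (a : B) {s : B} (hs : s ∈ socle B) :
    lambdaHom B a s ∈ socle B := by
  have hconj : a * s * a⁻¹ ∈ socle B := (MonoidHom.normal_ker _).conj_mem s hs a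
  have h : a * s = a * s * a⁻¹ + a := by
    rw [← mul_eq_add_of_mem_socle hconj, inv_mul_cancel_right]
  rwa [lambdaHom_apply, h, add_sub_cancel_right]

variable (B) in
def socleAddSubgroup : AddSubgroup B where
  carrier := socle B
  add_mem' {s t} hs ht := by
    rw [← mul_eq_add_of_mem_socle hs]
    exact mul_mem hs ht
  zero_mem' := one_eq_zero (B := B) ▸ one_mem _
  neg_mem' {s} hs := by
    have h : -s = s⁻¹ := by
      rw [neg_eq_iff_add_eq_zero, ← mul_eq_add_of_mem_socle hs, mul_inv_cancel, one_eq_zero]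
    exact h ▸ inv_mem hs

theorem lambdaHom_eq_pow {t : B} (ht : ∀ b, lambdaHom B t b - b ∈ socle B) (n : ℕ) {x : B}
    (hx : x - n • t ∈ socle B) : lambdaHom B x = lambdaHom B t ^ n := by
  induction n generalizing x with
  | zero => simpa using MonoidHom.mem_ker.mp hx
  | succ n ih =>
    -- `x = s + t * (x - t)` with `s` in the socle, so `λ_x = λ_t ∘ λ_{x - t}`.
    have hs : x - t * (x - t) ∈ socle B := by
      have h := (socleAddSubgroup B).neg_mem (ht (x - t))
      rwa [lambdaHom_apply, show -(t * (x - t) - t - (x - t)) = x - t * (x - t) by abel] at h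
    have hxt : x - t - n • t ∈ socle B := by rwa [sub_sub, ← succ_nsmul']
    rw [← sub_add_cancel x (t * (x - t)), lambdaHom_add_of_mem_socle hs, map_mul, ih hxt,
      pow_succ']

end LeftBrace

section LinearAlgebra

variable {K W : Type*} [Field K] [AddCommGroup W] [Module K W]

theorem Submodule.exists_linearMap_ker_eq {S : Submodule K W}
    (hS : Module.finrank K (W ⧸ S) = 1) {τ : W} (hτ : τ ∉ S) :
    ∃ z : W →ₗ[K] K, LinearMap.ker z = S ∧ z τ = 1 := by
  have hq : S.mkQ τ ≠ 0 := by simpa using hτ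
  have hspan := (finrank_eq_one_iff_of_nonzero _ hq).mp hS
  let coordτ := (LinearEquiv.ofTop _ hspan).symm.trans (LinearEquiv.coord K _ _ hq)
  refine ⟨coordτ.toLinearMap ∘ₗ S.mkQ, by simp [LinearEquiv.ker_comp], ?_⟩
  change LinearEquiv.coord K _ _ hq ⟨S.mkQ τ, Submodule.mem_span_singleton_self _⟩ = 1
  exact LinearEquiv.coord_self K _ _ hq

theorem Module.End.pow_finrank_eq_zero_of_isNilpotent [FiniteDimensional K W] {N : Module.End K W}
    (hN : IsNilpotent N) : N ^ Module.finrank K W = 0 := by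
  simpa [hN.charpoly_eq_X_pow_finrank] using N.aeval_self_charpoly

theorem Module.End.isNilpotent_sub_one_of_pow_eq_one (p : ℕ) [Fact p.Prime] [CharP K p]
    [Nontrivial W] {σ : Module.End K W} (hσ : σ ^ p = 1) : IsNilpotent (σ - 1) := by
  have : CharP (Module.End K W) p := charP_of_injective_algebraMap' K p
  refine ⟨p, ?_⟩
  rw [sub_pow_char_of_commute (p := p) (h := Commute.one_right σ), hσ, one_pow, sub_self]

theorem LinearMap.exists_apply_ne_zero_and_apply_ne_zero {R M M₁ M₂ : Type*} [Semiring R]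
    [AddCommMonoid M] [AddCommMonoid M₁] [AddCommMonoid M₂] [Module R M] [Module R M₁]
    [Module R M₂] {f : M →ₗ[R] M₁} {g : M →ₗ[R] M₂}
    (hf : f ≠ 0) (hg : g ≠ 0) : ∃ v, f v ≠ 0 ∧ g v ≠ 0 := by
  obtain ⟨u, hu⟩ := DFunLike.ne_iff.mp hf
  obtain ⟨v, hv⟩ := DFunLike.ne_iff.mp hg
  by_cases hgu : g u = 0
  · by_cases hfv : f v = 0
    · exact ⟨u + v, by simpa [hfv], by simpa [hgu]⟩
    · exact ⟨v, hfv, hv⟩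
  · exact ⟨u, hu, hgu⟩

end LinearAlgebra

/-- `σ` acts on the line `W ⧸ ker z` by a scalar `c` with `c ^ p = 1`, and `c ^ p = c` in
`ZMod p`. -/
theorem LinearMap.comp_eq_self_of_pow_eq_one {p : ℕ} [Fact p.Prime] {W : Type*} [AddCommGroup W]
    [Module (ZMod p) W] {z : W →ₗ[ZMod p] ZMod p} {σ : Module.End (ZMod p) W}
    (hσ : LinearMap.ker z ≤ (LinearMap.ker z).comap σ) (hσp : σ ^ p = 1) {τ : W}
    (hτ : z τ = 1) : z ∘ₗ σ = z := by
  set c := z (σ τ)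
  have hscalar (v : W) : z (σ v) = c * z v := by
    have h := hσ (show v - z v • τ ∈ LinearMap.ker z by simp [hτ])
    simpa [sub_eq_zero, mul_comm] using h
  have hpow : ∀ n : ℕ, z ((σ ^ n) τ) = c ^ n := by
    intro n
    induction n with
    | zero => simpa using hτ
    | succ n ih => rw [pow_succ', Module.End.mul_apply, hscalar, ih, pow_succ']
  have hc : c = 1 := by
    rw [← ZMod.pow_card c, ← hpow, hσp, Module.End.one_apply, hτ]
  ext v
  simp [hscalar, hc]

section NormalForm

variable (K : Type*) [CommRing K]

def coord₂ : K × K × K →ₗ[K] K := LinearMap.fst K K K ∘ₗ LinearMap.snd K K (K × K)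

def coord₃ : K × K × K →ₗ[K] K := LinearMap.snd K K K ∘ₗ LinearMap.snd K K (K × K)

def nilJ3 : Module.End K (K × K × K) := (coord₂ K).prod ((coord₃ K).prod 0)

def nilJ21 : Module.End K (K × K × K) := (coord₂ K).prod 0

variable {K}

@[simp] theorem coord₂_apply (v : K × K × K) : coord₂ K v = v.2.1 := rfl

@[simp] theorem coord₃_apply (v : K × K × K) : coord₃ K v = v.2.2 := rfl

@[simp] theorem nilJ3_apply (v : K × K × K) : nilJ3 K v = (v.2.1, v.2.2, 0) := rfl

@[simp] theorem nilJ21_apply (v : K × K × K) : nilJ21 K v = (v.2.1, 0, 0) := rfl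

theorem one_add_nilJ21_pow_apply (k : ℕ) (v : K × K × K) :
    ((1 + nilJ21 K) ^ k) v = (v.1 + k * v.2.1, v.2.1, v.2.2) := by
  induction k with
  | zero => simp
  | succ k ih =>
    rw [pow_succ', Module.End.mul_apply, ih]
    simp only [LinearMap.add_apply, Module.End.one_apply, nilJ21_apply, Prod.mk_add_mk]
    push_cast
    ring_nf

theorem choose2ZMod_add_one {p : ℕ} [Fact p.Prime] (h2 : (2 : ZMod p) ≠ 0) (c : ZMod p) :
    choose2ZMod p (c + 1) = choose2ZMod p c + c := by
  unfold choose2ZMod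
  linear_combination c * mul_inv_cancel₀ h2

theorem one_add_nilJ3_pow_apply {p : ℕ} [Fact p.Prime] (h2 : (2 : ZMod p) ≠ 0) (k : ℕ)
    (v : ZMod p × ZMod p × ZMod p) :
    ((1 + nilJ3 (ZMod p)) ^ k) v = (v.1 + k * v.2.1 + choose2ZMod p k * v.2.2,
      v.2.1 + k * v.2.2, v.2.2) := by
  induction k with
  | zero => simp [choose2ZMod]
  | succ k ih =>
    rw [pow_succ', Module.End.mul_apply, ih]
    simp only [LinearMap.add_apply, Module.End.one_apply, nilJ3_apply, Prod.mk_add_mk,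
      Nat.cast_succ, choose2ZMod_add_one h2]
    ring_nf

end NormalForm

section TwistedMul

variable {p : ℕ} {W W' : Type*} [AddCommGroup W] [Module (ZMod p) W] [AddCommGroup W']
  [Module (ZMod p) W']

def twistedMul (σ : Module.End (ZMod p) W) (z : W →ₗ[ZMod p] ZMod p) (a b : W) : W :=
  a + (σ ^ (z a).val) b

theorem LinearEquiv.symm_twistedMul (G : W' ≃ₗ[ZMod p] W) {σ : Module.End (ZMod p) W}
    {σ' : Module.End (ZMod p) W'} {z : W →ₗ[ZMod p] ZMod p} {z' : W' →ₗ[ZMod p] ZMod p}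
    (hσ : σ ∘ₗ G = G ∘ₗ σ') (hz : z ∘ₗ G = z') (a b : W) :
    G.symm (twistedMul σ z a b) = twistedMul σ' z' (G.symm a) (G.symm b) := by
  obtain ⟨a, rfl⟩ := G.surjective a
  obtain ⟨b, rfl⟩ := G.surjective b
  have hpow := LinearMap.congr_fun (Module.End.commute_pow_left_of_commute hσ (z' a).val) b
  rw [← hz] at hpow ⊢
  simp only [twistedMul, LinearMap.comp_apply, LinearEquiv.coe_coe] at hpow ⊢
  rw [hpow, map_add, G.symm_apply_apply, G.symm_apply_apply, G.symm_apply_apply]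

end TwistedMul

theorem mulSocP2A_eq_twistedMul (p : ℕ) [Fact p.Prime] (h2 : (2 : ZMod p) ≠ 0) :
    mulSocP2A p = twistedMul (1 + nilJ3 (ZMod p)) (coord₃ (ZMod p)) := by
  ext a b <;> simp [twistedMul, one_add_nilJ3_pow_apply h2, mulSocP2A] <;> ring

section

variable (p : ℕ) [NeZero p]

theorem mulSocP2B_eq_twistedMul :
    mulSocP2B p = twistedMul (1 + nilJ21 (ZMod p)) (coord₂ (ZMod p)) := by
  ext a b <;> simp [twistedMul, one_add_nilJ21_pow_apply, mulSocP2B, add_assoc]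

theorem mulSocP2C_eq_twistedMul :
    mulSocP2C p = twistedMul (1 + nilJ21 (ZMod p)) (coord₃ (ZMod p)) := by
  ext a b <;> simp [twistedMul, one_add_nilJ21_pow_apply, mulSocP2C, add_assoc]

end

section TripleMap

variable {K W : Type*} [CommRing K] [AddCommGroup W] [Module K W]

variable (K) in
def tripleMap (b₁ b₂ b₃ : W) : K × K × K →ₗ[K] W :=
  (LinearMap.toSpanSingleton K W b₁).coprod
    ((LinearMap.toSpanSingleton K W b₂).coprod (LinearMap.toSpanSingleton K W b₃))

@[simp] theorem tripleMap_apply (b₁ b₂ b₃ : W) (v : K × K × K) :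
    tripleMap K b₁ b₂ b₃ v = v.1 • b₁ + (v.2.1 • b₂ + v.2.2 • b₃) := rfl

theorem LinearMap.comp_tripleMap {W' : Type*} [AddCommGroup W'] [Module K W'] (f : W →ₗ[K] W')
    (b₁ b₂ b₃ : W) : f ∘ₗ tripleMap K b₁ b₂ b₃ = tripleMap K (f b₁) (f b₂) (f b₃) := by
  ext <;> simp

theorem tripleMap_comp_nilJ3 (b₁ b₂ b₃ : W) :
    tripleMap K b₁ b₂ b₃ ∘ₗ nilJ3 K = tripleMap K 0 b₁ b₂ := by
  ext <;> simp

theorem tripleMap_comp_nilJ21 (b₁ b₂ b₃ : W) :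
    tripleMap K b₁ b₂ b₃ ∘ₗ nilJ21 K = tripleMap K 0 b₁ 0 := by
  ext <;> simp

theorem tripleMap_zero_one_zero : tripleMap K (0 : K) 1 0 = coord₂ K := by
  ext <;> simp

theorem tripleMap_zero_zero_one : tripleMap K (0 : K) 0 1 = coord₃ K := by
  ext <;> simp

end TripleMap

section Classification

variable {K W : Type*} [Field K] [AddCommGroup W] [Module K W]

theorem tripleMap_injective {N : Module.End K W} {z : W →ₗ[K] K} {b₁ b₂ b₃ : W}
    (hb₁ : b₁ ≠ 0) (hN₁ : N b₁ = 0) (hN₂ : N b₂ = b₁) (hz₁ : z b₁ = 0) (hz₂ : z b₂ = 0)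
    (hz₃ : z b₃ = 1) : Function.Injective (tripleMap K b₁ b₂ b₃) := by
  rw [injective_iff_map_eq_zero]
  rintro ⟨x, y, w⟩ h
  simp only [tripleMap_apply] at h
  have hw : w = 0 := by simpa [hz₁, hz₂, hz₃] using congrArg z h
  subst hw
  have hy : y = 0 := by simpa [hN₁, hN₂, hb₁] using congrArg N h
  subst hy
  have hx : x = 0 := by simpa [hb₁] using h
  simp [hx]

theorem finrank_prod_prod_self : Module.finrank K (K × K × K) = 3 := by
  simp [Module.finrank_prod]

variable [FiniteDimensional K W]

theorem exists_linearEquiv_eq_tripleMap (hW : Module.finrank K W = 3) {b₁ b₂ b₃ : W}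
    (h : Function.Injective (tripleMap K b₁ b₂ b₃)) :
    ∃ G : (K × K × K) ≃ₗ[K] W, (G : K × K × K →ₗ[K] W) = tripleMap K b₁ b₂ b₃ :=
  ⟨LinearMap.linearEquivOfInjective _ h (by rw [finrank_prod_prod_self, hW]), rfl⟩

theorem finrank_ker_eq_two_of_sq_eq_zero (hW : Module.finrank K W = 3) {N : Module.End K W}
    (hN : N ≠ 0) (hN2 : N ^ 2 = 0) : Module.finrank K (LinearMap.ker N) = 2 := by
  have hrange : LinearMap.range N ≤ LinearMap.ker N :=
    LinearMap.range_le_ker_iff.mpr (by rwa [pow_two] at hN2)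
  have hle := Submodule.finrank_mono hrange
  have hsum := LinearMap.finrank_range_add_finrank_ker N
  have hpos : Module.finrank K (LinearMap.range N) ≠ 0 := by
    rwa [Ne, Submodule.finrank_eq_zero, LinearMap.range_eq_bot]
  omega

variable {N : Module.End K W} {z : W →ₗ[K] K}

theorem finrank_ker_eq_two_of_ne_zero (hW : Module.finrank K W = 3) (hz : z ≠ 0) :
    Module.finrank K (LinearMap.ker z) = 2 := by
  have := Module.Dual.finrank_ker_add_one_of_ne_zero hz
  omega

theorem exists_linearEquiv_nilJ3 (hW : Module.finrank K W = 3) (hN3 : N ^ 3 = 0)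
    (hN2 : N ^ 2 ≠ 0) (hz : z ≠ 0) (hzN : z ∘ₗ N = 0) :
    ∃ G : (K × K × K) ≃ₗ[K] W, N ∘ₗ G = G ∘ₗ nilJ3 K ∧ z ∘ₗ G = coord₃ K := by
  obtain ⟨v, hzv, hNv⟩ := LinearMap.exists_apply_ne_zero_and_apply_ne_zero hz hN2
  set b₃ := (z v)⁻¹ • v
  have hz₃ : z b₃ = 1 := by simp [b₃, hzv]
  have hb₁ : N (N b₃) ≠ 0 := by simpa [b₃, pow_two, hzv] using hNv
  have hN₁ : N (N (N b₃)) = 0 := by simpa [pow_succ] using LinearMap.congr_fun hN3 b₃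
  have hzN' (w : W) : z (N w) = 0 := LinearMap.congr_fun hzN w
  obtain ⟨G, hG⟩ := exists_linearEquiv_eq_tripleMap hW
    (tripleMap_injective hb₁ hN₁ rfl (hzN' _) (hzN' _) hz₃)
  refine ⟨G, ?_, ?_⟩
  · rw [hG, LinearMap.comp_tripleMap, tripleMap_comp_nilJ3, hN₁]
  · rw [hG, LinearMap.comp_tripleMap, hzN', hzN', hz₃, tripleMap_zero_zero_one]

theorem exists_linearEquiv_nilJ21_coord₂ (hW : Module.finrank K W = 3) (hN : N ≠ 0)
    (hz : z ≠ 0) (hzN : z ∘ₗ N = 0) (hker : LinearMap.ker z ≤ LinearMap.ker N) :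
    ∃ G : (K × K × K) ≃ₗ[K] W, N ∘ₗ G = G ∘ₗ nilJ21 K ∧ z ∘ₗ G = coord₂ K := by
  obtain ⟨v, hNv⟩ := DFunLike.ne_iff.mp hN
  have hzv : z v ≠ 0 := fun h => hNv (hker h)
  set b₂ := (z v)⁻¹ • v
  have hz₂ : z b₂ = 1 := by simp [b₂, hzv]
  have hb₁ : N b₂ ≠ 0 := by simpa [b₂, hzv] using hNv
  have hz₁ : z (N b₂) = 0 := LinearMap.congr_fun hzN b₂
  have hN₁ : N (N b₂) = 0 := hker hz₁
  have hspan : ¬ LinearMap.ker z ≤ K ∙ N b₂ := by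
    intro h
    have := Submodule.finrank_mono h
    rw [finrank_ker_eq_two_of_ne_zero hW hz, finrank_span_singleton hb₁] at this
    omega
  obtain ⟨b₃, hz₃, hb₃⟩ := SetLike.not_le_iff_exists.mp hspan
  have hpair : LinearIndependent K ![N b₂, b₃] :=
    (LinearIndependent.pair_iff' hb₁).mpr fun a ha =>
      hb₃ (ha ▸ Submodule.smul_mem _ _ (Submodule.mem_span_singleton_self _))
  have hinj : Function.Injective (tripleMap K (N b₂) b₂ b₃) := by
    rw [injective_iff_map_eq_zero]
    rintro ⟨x, y, w⟩ h
    simp only [tripleMap_apply] at h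
    have hy : y = 0 := by simpa [hz₁, hz₂, LinearMap.mem_ker.mp hz₃] using congrArg z h
    subst hy
    obtain ⟨rfl, rfl⟩ := LinearIndependent.pair_iff.mp hpair x w (by simpa using h)
    rfl
  obtain ⟨G, hG⟩ := exists_linearEquiv_eq_tripleMap hW hinj
  refine ⟨G, ?_, ?_⟩
  · rw [hG, LinearMap.comp_tripleMap, tripleMap_comp_nilJ21, hN₁, hker hz₃]
  · rw [hG, LinearMap.comp_tripleMap, hz₁, hz₂, LinearMap.mem_ker.mp hz₃,
      tripleMap_zero_one_zero]

theorem exists_linearEquiv_nilJ21_coord₃ (hW : Module.finrank K W = 3) (hN : N ≠ 0)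
    (hN2 : N ^ 2 = 0) (hz : z ≠ 0) (hzN : z ∘ₗ N = 0)
    (hker : ¬ LinearMap.ker z ≤ LinearMap.ker N) :
    ∃ G : (K × K × K) ≃ₗ[K] W, N ∘ₗ G = G ∘ₗ nilJ21 K ∧ z ∘ₗ G = coord₃ K := by
  obtain ⟨u, hzu, hNu⟩ := SetLike.not_le_iff_exists.mp hker
  have hker' : ¬ LinearMap.ker N ≤ LinearMap.ker z := fun h =>
    hker (Submodule.eq_of_le_of_finrank_eq h (by
      rw [finrank_ker_eq_two_of_sq_eq_zero hW hN hN2, finrank_ker_eq_two_of_ne_zero hW hz])).ge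
  obtain ⟨v, hNv, hzv⟩ := SetLike.not_le_iff_exists.mp hker'
  rw [LinearMap.mem_ker] at hzu hNu hNv hzv
  set b₃ := (z v)⁻¹ • v
  have hz₃ : z b₃ = 1 := by simp [b₃, hzv]
  have hN₃ : N b₃ = 0 := by simp [b₃, hNv]
  have hN₁ : N (N u) = 0 := by simpa [pow_two] using LinearMap.congr_fun hN2 u
  have hz₁ : z (N u) = 0 := LinearMap.congr_fun hzN u
  obtain ⟨G, hG⟩ := exists_linearEquiv_eq_tripleMap hW
    (tripleMap_injective hNu hN₁ rfl hz₁ hzu hz₃)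
  refine ⟨G, ?_, ?_⟩
  · rw [hG, LinearMap.comp_tripleMap, tripleMap_comp_nilJ21, hN₁, hN₃]
  · rw [hG, LinearMap.comp_tripleMap, hz₁, hzu, hz₃, tripleMap_zero_zero_one]

end Classification

theorem exists_linearEquiv_one_add_nil {K W : Type*} [Field K] [AddCommGroup W] [Module K W]
    [FiniteDimensional K W] (p : ℕ) [Fact p.Prime] [CharP K p]
    (hW : Module.finrank K W = 3) {σ : Module.End K W} (hσp : σ ^ p = 1) (hσ : σ ≠ 1)
    {z : W →ₗ[K] K} (hz : z ≠ 0) (hzσ : z ∘ₗ σ = z) :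
    (∃ G : (K × K × K) ≃ₗ[K] W, σ ∘ₗ G = G ∘ₗ (1 + nilJ3 K) ∧ z ∘ₗ G = coord₃ K) ∨
    (∃ G : (K × K × K) ≃ₗ[K] W, σ ∘ₗ G = G ∘ₗ (1 + nilJ21 K) ∧ z ∘ₗ G = coord₂ K) ∨
    (∃ G : (K × K × K) ≃ₗ[K] W, σ ∘ₗ G = G ∘ₗ (1 + nilJ21 K) ∧ z ∘ₗ G = coord₃ K) := by
  have : Nontrivial W := Module.nontrivial_of_finrank_eq_succ hW
  set N := σ - 1
  have hN3 : N ^ 3 = 0 := hW ▸ Module.End.pow_finrank_eq_zero_of_isNilpotent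
    (Module.End.isNilpotent_sub_one_of_pow_eq_one p hσp)
  have hN : N ≠ 0 := sub_ne_zero.mpr hσ
  have hzN : z ∘ₗ N = 0 := by simp [N, LinearMap.comp_sub, hzσ, Module.End.one_eq_id]
  have hconj {M : Module.End K (K × K × K)} {G : (K × K × K) ≃ₗ[K] W}
      (h : N ∘ₗ G = G ∘ₗ M) : σ ∘ₗ G = G ∘ₗ (1 + M) := by
    rw [← sub_add_cancel σ 1, LinearMap.add_comp, LinearMap.comp_add, h, add_comm]
    rfl
  by_cases hN2 : N ^ 2 = 0
  · by_cases hker : LinearMap.ker z ≤ LinearMap.ker N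
    · obtain ⟨G, hGN, hGz⟩ := exists_linearEquiv_nilJ21_coord₂ hW hN hz hzN hker
      exact .inr (.inl ⟨G, hconj hGN, hGz⟩)
    · obtain ⟨G, hGN, hGz⟩ := exists_linearEquiv_nilJ21_coord₃ hW hN hN2 hz hzN hker
      exact .inr (.inr ⟨G, hconj hGN, hGz⟩)
  · obtain ⟨G, hGN, hGz⟩ := exists_linearEquiv_nilJ3 hW hN3 hN2 hz hzN
    exact .inl ⟨G, hconj hGN, hGz⟩

theorem AddMonoidHom.toZModLinearMap_pow_apply (p : ℕ) {M : Type*} [AddCommGroup M]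
    [Module (ZMod p) M] (f : AddMonoid.End M) (n : ℕ) (b : M) :
    (f.toZModLinearMap p ^ n) b = (f ^ n) b := by
  rw [Module.End.pow_apply, AddMonoid.End.coe_pow]
  rfl

namespace LeftBrace

variable {B : Type*} [LeftBrace B]

instance : (socle B).Normal := MonoidHom.normal_ker _

theorem index_socle {p : ℕ} (hp : p.Prime) (hB : Nat.card B = p ^ 3)
    (hS : Nat.card (socle B) = p ^ 2) : (socle B).index = p := by
  have h := (socle B).card_mul_index
  rw [hS, hB] at h
  exact Nat.eq_of_mul_eq_mul_left (pow_pos hp.pos 2) (by rw [h]; ring)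

def socleSubmodule (p : ℕ) (B : Type*) [LeftBrace B] [Module (ZMod p) B] : Submodule (ZMod p) B :=
  AddSubgroup.toZModSubmodule p (socleAddSubgroup B)

variable {p : ℕ} [Module (ZMod p) B]

theorem mem_socleSubmodule {s : B} : s ∈ socleSubmodule p B ↔ s ∈ socle B := Iff.rfl

variable [Fact p.Prime]

theorem finrank_quotient_socleSubmodule (hB : Module.finrank (ZMod p) B = 3)
    (hS : Nat.card (socle B) = p ^ 2) : Module.finrank (ZMod p) (B ⧸ socleSubmodule p B) = 1 := by
  have : Module.Finite (ZMod p) B := Module.finite_of_finrank_eq_succ hB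
  have hcard := Module.natCard_eq_pow_finrank (K := ZMod p) (V := socleSubmodule p B)
  rw [Nat.card_zmod] at hcard
  have h2 : Module.finrank (ZMod p) (socleSubmodule p B) = 2 :=
    Nat.pow_right_injective (Fact.out : p.Prime).two_le (hcard.symm.trans hS)
  have := (socleSubmodule p B).finrank_quotient_add_finrank
  omega

theorem comp_lambdaHom_eq_self {t : B} {z : B →ₗ[ZMod p] ZMod p}
    (hker : LinearMap.ker z = socleSubmodule p B) (hzt : z t = 1) (ht : lambdaHom B t ^ p = 1) :
    z ∘ₗ (lambdaHom B t).toZModLinearMap p = z := by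
  refine LinearMap.comp_eq_self_of_pow_eq_one (fun s hs => ?_) ?_ hzt
  · rw [hker] at hs ⊢
    exact lambdaHom_apply_mem_socle t hs
  · ext b
    rw [AddMonoidHom.toZModLinearMap_pow_apply, ht]
    rfl

theorem mul_eq_twistedMul {t : B} {z : B →ₗ[ZMod p] ZMod p}
    (hker : LinearMap.ker z = socleSubmodule p B) (hzt : z t = 1)
    (hzσ : z ∘ₗ (lambdaHom B t).toZModLinearMap p = z) (x y : B) :
    x * y = twistedMul ((lambdaHom B t).toZModLinearMap p) z x y := by
  have ht (b : B) : lambdaHom B t b - b ∈ socle B := by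
    rw [← mem_socleSubmodule (p := p), ← hker, LinearMap.mem_ker, map_sub, sub_eq_zero]
    exact LinearMap.congr_fun hzσ b
  have hx : x - (z x).val • t ∈ socle B := by
    rw [← mem_socleSubmodule (p := p), ← hker, LinearMap.mem_ker, map_sub, map_nsmul, hzt,
      nsmul_one, ZMod.natCast_zmod_val, sub_self]
  rw [mul_eq_add_lambdaHom, lambdaHom_eq_pow ht _ hx, twistedMul,
    AddMonoidHom.toZModLinearMap_pow_apply]

theorem exists_eq_twistedMul (hB : Module.finrank (ZMod p) B = 3)
    (hS : Nat.card (socle B) = p ^ 2) :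
    ∃ (σ : Module.End (ZMod p) B) (z : B →ₗ[ZMod p] ZMod p),
      σ ^ p = 1 ∧ σ ≠ 1 ∧ z ≠ 0 ∧ z ∘ₗ σ = z ∧ ∀ x y : B, x * y = twistedMul σ z x y := by
  have hp : p.Prime := Fact.out
  have : Module.Finite (ZMod p) B := Module.finite_of_finrank_eq_succ hB
  have : Finite B := Module.finite_of_finite (ZMod p)
  have hindex : (socle B).index = p := index_socle hp
    (by rw [Module.natCard_eq_pow_finrank (K := ZMod p), Nat.card_zmod, hB]) hS
  obtain ⟨t, ht⟩ : ∃ t, t ∉ socle B := by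
    by_contra! h
    have := Subgroup.index_eq_one.mpr (eq_top_iff.mpr fun x _ => h x)
    exact hp.one_lt.ne' (hindex ▸ this)
  have htp : lambdaHom B t ^ p = 1 := by
    rw [← map_pow]
    exact hindex ▸ (socle B).pow_index_mem t
  have hq := finrank_quotient_socleSubmodule hB hS
  have ht' : t ∉ socleSubmodule p B := ht
  obtain ⟨z, hker, hzt⟩ := Submodule.exists_linearMap_ker_eq hq ht'
  have hzσ := comp_lambdaHom_eq_self hker hzt htp
  refine ⟨_, z, ?_, ?_, ?_, hzσ, mul_eq_twistedMul hker hzt hzσ⟩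
  · ext b
    rw [AddMonoidHom.toZModLinearMap_pow_apply, htp]
    rfl
  · intro h
    refine ht (mem_socle_iff.mpr fun b => ?_)
    exact LinearMap.congr_fun h b
  · rintro rfl
    simp at hzt

theorem exists_linearEquiv_mulSocP2 (h2 : (2 : ZMod p) ≠ 0) (hB : Module.finrank (ZMod p) B = 3)
    (hS : Nat.card (socle B) = p ^ 2) :
    (∃ e : B ≃ₗ[ZMod p] ZMod p × ZMod p × ZMod p,
      ∀ x y : B, e (x * y) = mulSocP2A p (e x) (e y)) ∨
    (∃ e : B ≃ₗ[ZMod p] ZMod p × ZMod p × ZMod p,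
      ∀ x y : B, e (x * y) = mulSocP2B p (e x) (e y)) ∨
    (∃ e : B ≃ₗ[ZMod p] ZMod p × ZMod p × ZMod p,
      ∀ x y : B, e (x * y) = mulSocP2C p (e x) (e y)) := by
  have : Module.Finite (ZMod p) B := Module.finite_of_finrank_eq_succ hB
  obtain ⟨σ, z, hσp, hσ, hz, hzσ, hmul⟩ := exists_eq_twistedMul hB hS
  have key {σ' : Module.End (ZMod p) (ZMod p × ZMod p × ZMod p)} {z'}
      {G : (ZMod p × ZMod p × ZMod p) ≃ₗ[ZMod p] B} (hGσ : σ ∘ₗ G = G ∘ₗ σ') (hGz : z ∘ₗ G = z')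
      (x y : B) : G.symm (x * y) = twistedMul σ' z' (G.symm x) (G.symm y) := by
    rw [hmul, G.symm_twistedMul hGσ hGz]
  rcases exists_linearEquiv_one_add_nil p hB hσp hσ hz hzσ with
    ⟨G, hGσ, hGz⟩ | ⟨G, hGσ, hGz⟩ | ⟨G, hGσ, hGz⟩
  · exact .inl ⟨G.symm, by rw [mulSocP2A_eq_twistedMul p h2]; exact key hGσ hGz⟩
  · exact .inr (.inl ⟨G.symm, by rw [mulSocP2B_eq_twistedMul]; exact key hGσ hGz⟩)
  · exact .inr (.inr ⟨G.symm, by rw [mulSocP2C_eq_twistedMul]; exact key hGσ hGz⟩)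

end LeftBrace

section Invariants

variable {V V' : Type*} {M : V → V → V} {M' : V' → V' → V'}

theorem comm_iff_of_equiv (f : V ≃ V') (hf : ∀ a b, f (M a b) = M' (f a) (f b)) :
    (∀ a b, M a b = M b a) ↔ ∀ a b, M' a b = M' b a := by
  refine ⟨fun h a b => ?_, fun h a b => f.injective (by rw [hf, hf, h])⟩
  rw [← f.apply_symm_apply a, ← f.apply_symm_apply b, ← hf, ← hf, h]

variable [AddCommGroup V] [AddCommGroup V']

/-- `a ∗ b = λ_a b - b`, so `a ∗ (a ∗ b) = 0` for all `b` says `(λ_a - 1) ^ 2 = 0`. -/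
def braceStar (M : V → V → V) (a b : V) : V := M a b - a - b

theorem map_braceStar (f : V →+ V') (hf : ∀ a b, f (M a b) = M' (f a) (f b)) (a b : V) :
    f (braceStar M a b) = braceStar M' (f a) (f b) := by
  simp [braceStar, hf]

theorem braceStar_braceStar_eq_zero_of_injective (f : V →+ V') (hf : Function.Injective f)
    (hM : ∀ a b, f (M a b) = M' (f a) (f b))
    (h' : ∀ a b, braceStar M' a (braceStar M' a b) = 0) (a b : V) :
    braceStar M a (braceStar M a b) = 0 :=
  hf (by rw [map_braceStar f hM, map_braceStar f hM, h', map_zero])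

end Invariants

section

variable (p : ℕ)

theorem mulSocP2B_comm (a b : ZMod p × ZMod p × ZMod p) : mulSocP2B p a b = mulSocP2B p b a := by
  simp only [mulSocP2B, Prod.mk.injEq]
  refine ⟨by ring, by ring, by ring⟩

theorem braceStar_braceStar_mulSocP2C (a b : ZMod p × ZMod p × ZMod p) :
    braceStar (mulSocP2C p) a (braceStar (mulSocP2C p) a b) = 0 := by
  ext <;> simp [braceStar, mulSocP2C]

variable [Fact p.Prime]

theorem mulSocP2A_not_comm : mulSocP2A p (0, 0, 1) (0, 1, 0) ≠ mulSocP2A p (0, 1, 0) (0, 0, 1) := by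
  simp [mulSocP2A, choose2ZMod]

theorem mulSocP2C_not_comm : mulSocP2C p (0, 0, 1) (0, 1, 0) ≠ mulSocP2C p (0, 1, 0) (0, 0, 1) := by
  simp [mulSocP2C]

theorem braceStar_braceStar_mulSocP2A :
    braceStar (mulSocP2A p) (0, 0, 1) (braceStar (mulSocP2A p) (0, 0, 1) (0, 0, 1)) ≠ 0 := by
  simp [braceStar, mulSocP2A, choose2ZMod]

end

/-- For an odd prime `p`, every left brace with additive group isomorphic to `(Z/(p))³`
whose socle has order `p²` is isomorphic to exactly one of the three left braces with
multiplications `mulSocP2A`, `mulSocP2B`, `mulSocP2C`; these are pairwise non-isomorphic. -/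
theorem braces_p_cubed_elementary_socle_p2 (p : ℕ) (hp : p.Prime) (hodd : p ≠ 2) :
    (∀ (B : Type*) [LeftBrace B], (B ≃+ ZMod p × ZMod p × ZMod p) →
      Nat.card ↥{a : B | ∀ b : B, a * b - a = b} = p ^ 2 →
      (∃ e : B ≃+ ZMod p × ZMod p × ZMod p,
        ∀ x y : B, e (x * y) = mulSocP2A p (e x) (e y)) ∨
      (∃ e : B ≃+ ZMod p × ZMod p × ZMod p,
        ∀ x y : B, e (x * y) = mulSocP2B p (e x) (e y)) ∨
      (∃ e : B ≃+ ZMod p × ZMod p × ZMod p,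
        ∀ x y : B, e (x * y) = mulSocP2C p (e x) (e y))) ∧
    (¬∃ f : (ZMod p × ZMod p × ZMod p) ≃+ ZMod p × ZMod p × ZMod p,
      ∀ a b, f (mulSocP2A p a b) = mulSocP2B p (f a) (f b)) ∧
    (¬∃ f : (ZMod p × ZMod p × ZMod p) ≃+ ZMod p × ZMod p × ZMod p,
      ∀ a b, f (mulSocP2A p a b) = mulSocP2C p (f a) (f b)) ∧
    (¬∃ f : (ZMod p × ZMod p × ZMod p) ≃+ ZMod p × ZMod p × ZMod p,
      ∀ a b, f (mulSocP2B p a b) = mulSocP2C p (f a) (f b)) := by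
  have : Fact p.Prime := ⟨hp⟩
  refine ⟨fun B _ e hS => ?_, ?_, ?_, ?_⟩
  · let _ : Module (ZMod p) B := AddCommGroup.zmodModule fun x => e.injective (by
      rw [map_nsmul, map_zero, ← Nat.cast_smul_eq_nsmul (ZMod p), ZMod.natCast_self, zero_smul])
    have hB : Module.finrank (ZMod p) B = 3 := by
      rw [(LinearEquiv.ofBijective (e.toAddMonoidHom.toZModLinearMap p) e.bijective).finrank_eq]
      simp [Module.finrank_prod]
    have h2 : (2 : ZMod p) ≠ 0 := Ring.two_ne_zero (by rwa [ZMod.ringChar_zmod_n])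
    have hS' : Nat.card (LeftBrace.socle B) = p ^ 2 :=
      (Nat.card_congr (Equiv.subtypeEquivRight fun _ => LeftBrace.mem_socle_iff)).trans hS
    rcases LeftBrace.exists_linearEquiv_mulSocP2 h2 hB hS' with ⟨e, he⟩ | ⟨e, he⟩ | ⟨e, he⟩
    exacts [.inl ⟨e.toAddEquiv, he⟩, .inr (.inl ⟨e.toAddEquiv, he⟩),
      .inr (.inr ⟨e.toAddEquiv, he⟩)]
  · rintro ⟨f, hf⟩
    exact mulSocP2A_not_comm p ((comm_iff_of_equiv f.toEquiv hf).mpr (mulSocP2B_comm p) _ _)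
  · rintro ⟨f, hf⟩
    exact braceStar_braceStar_mulSocP2A p (braceStar_braceStar_eq_zero_of_injective
      f.toAddMonoidHom f.injective hf (braceStar_braceStar_mulSocP2C p) _ _)
  · rintro ⟨f, hf⟩
    exact mulSocP2C_not_comm p ((comm_iff_of_equiv f.toEquiv hf).mp (mulSocP2B_comm p) _ _)
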